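/- arXiv:2601.20012 — 3 statements merged into one kernel-verified Lean document; each statement's English description precedes it below -/
import Mathlib

section
/- Both fields ℚ[x]/(x⁴ - x³ - x² - x + 1) and ℚ[x]/(x⁴ + x³ - x² + x + 1) have degree 4 over ℚ and contain a square root of 13, i.e., there exists an element y in each field with y² = 13. -/
open Polynomial

lemma aux_finrank (f : ℚ[X]) (hf : f ≠ 0) :
    Module.finrank ℚ (AdjoinRoot f) = f.natDegree := by
  rw [(AdjoinRoot.powerBasis hf).finrank, AdjoinRoot.powerBasis_dim]

/-- Both ℚ[x]/(x⁴ - x³ - x² - x + 1) and ℚ[x]/(x⁴ + x³ - x² + x + 1) have degree 4 over ℚ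
and contain a square root of 13. -/
theorem stmt6 :
    Module.finrank ℚ (AdjoinRoot (X ^ 4 - X ^ 3 - X ^ 2 - X + 1 : ℚ[X])) = 4 ∧
    (∃ y : AdjoinRoot (X ^ 4 - X ^ 3 - X ^ 2 - X + 1 : ℚ[X]), y ^ 2 = 13) ∧
    Module.finrank ℚ (AdjoinRoot (X ^ 4 + X ^ 3 - X ^ 2 + X + 1 : ℚ[X])) = 4 ∧
    (∃ y : AdjoinRoot (X ^ 4 + X ^ 3 - X ^ 2 + X + 1 : ℚ[X]), y ^ 2 = 13) := by
  have h1 : (X ^ 4 - X ^ 3 - X ^ 2 - X + 1 : ℚ[X]).natDegree = 4 := by compute_degree!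
  have h2 : (X ^ 4 + X ^ 3 - X ^ 2 + X + 1 : ℚ[X]).natDegree = 4 := by compute_degree!
  have n1 : (X ^ 4 - X ^ 3 - X ^ 2 - X + 1 : ℚ[X]) ≠ 0 := fun h => by simp [h] at h1
  have n2 : (X ^ 4 + X ^ 3 - X ^ 2 + X + 1 : ℚ[X]) ≠ 0 := fun h => by simp [h] at h2
  refine ⟨by rw [aux_finrank _ n1, h1], ?_, by rw [aux_finrank _ n2, h2], ?_⟩
  · refine ⟨AdjoinRoot.mk _ (2*X^3 - 2*X^2 - 4*X - 1), ?_⟩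
    have e : ((2*X^3 - 2*X^2 - 4*X - 1 : ℚ[X]))^2
        = (X ^ 4 - X ^ 3 - X ^ 2 - X + 1) * (4*X^2 - 4*X - 12) + 13 := by ring
    rw [← map_pow, e, map_add, map_mul, AdjoinRoot.mk_self, zero_mul, zero_add]
    exact map_ofNat _ 13
  · refine ⟨AdjoinRoot.mk _ (-2*X^3 - 2*X^2 + 4*X - 1), ?_⟩
    have e : ((-2*X^3 - 2*X^2 + 4*X - 1 : ℚ[X]))^2
        = (X ^ 4 + X ^ 3 - X ^ 2 + X + 1) * (4*X^2 + 4*X - 12) + 13 := by ring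
    rw [← map_pow, e, map_add, map_mul, AdjoinRoot.mk_self, zero_mul, zero_add]
    exact map_ofNat _ 13
end

section
/- The Perron–Frobenius eigenvalue of the fusion matrix of ρ in the H₃ fusion ring (the 6×6 nonnegative integer matrix N_ρ with (N_ρ)_{jk} = N_{ρ,j}^k) is d = (3 + √13)/2; equivalently, the vector (1, 1, 1, d, d, d) is an eigenvector of N_ρ with eigenvalue d, and d is the largest real eigenvalue. -/
@[simp] lemma cons_val_five' {α : Type*} (a₀ a₁ a₂ a₃ a₄ a₅ : α) :
    ![a₀,a₁,a₂,a₃,a₄,a₅] (5 : Fin 6) = a₅ := rfl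

lemma finMk0 (h : 0 < 6) : (⟨0, h⟩ : Fin 6) = 0 := rfl
lemma finMk1 (h : 1 < 6) : (⟨1, h⟩ : Fin 6) = 1 := rfl
lemma finMk2 (h : 2 < 6) : (⟨2, h⟩ : Fin 6) = 2 := rfl
lemma finMk3 (h : 3 < 6) : (⟨3, h⟩ : Fin 6) = 3 := rfl
lemma finMk4 (h : 4 < 6) : (⟨4, h⟩ : Fin 6) = 4 := rfl
lemma finMk5 (h : 5 < 6) : (⟨5, h⟩ : Fin 6) = 5 := rfl

/-- The fusion matrix of ρ in the H₃ fusion ring with respect to the ordered basis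
(𝟙, α, α*, ρ, αρ, α*ρ): (N_ρ)_{jk} = N_{ρ,j}^k. -/
def Nrho : Matrix (Fin 6) (Fin 6) ℝ :=
  !![0,0,0,1,0,0;
     0,0,0,0,0,1;
     0,0,0,0,1,0;
     1,0,0,1,1,1;
     0,0,1,1,1,1;
     0,1,0,1,1,1]

/-- The Perron–Frobenius eigenvalue of N_ρ is d = (3+√13)/2: the vector (1,1,1,d,d,d) is an
eigenvector of N_ρ with eigenvalue d, and d is the largest real eigenvalue. -/
theorem stmt10 :
    Nrho.mulVec ![1, 1, 1, (3 + Real.sqrt 13) / 2, (3 + Real.sqrt 13) / 2,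
        (3 + Real.sqrt 13) / 2]
      = ((3 + Real.sqrt 13) / 2) •
        ![1, 1, 1, (3 + Real.sqrt 13) / 2, (3 + Real.sqrt 13) / 2, (3 + Real.sqrt 13) / 2] ∧
    ∀ μ : ℝ, (∃ v : Fin 6 → ℝ, v ≠ 0 ∧ Nrho.mulVec v = μ • v) →
      μ ≤ (3 + Real.sqrt 13) / 2 := by
  have hs : Real.sqrt 13 ^ 2 = 13 := Real.sq_sqrt (by norm_num)
  have hs0 : (0:ℝ) ≤ Real.sqrt 13 := Real.sqrt_nonneg 13
  have hs3 : (3:ℝ) ≤ Real.sqrt 13 := by nlinarith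
  constructor
  · funext i
    fin_cases i <;>
    · simp only [finMk0, finMk1, finMk2, finMk3, finMk4, finMk5, Fin.isValue, Matrix.mulVec, dotProduct, Fin.sum_univ_six,
        Pi.smul_apply, smul_eq_mul,
        show Nrho 0 0 = 0 from rfl,
        show Nrho 0 1 = 0 from rfl,
        show Nrho 0 2 = 0 from rfl,
        show Nrho 0 3 = 1 from rfl,
        show Nrho 0 4 = 0 from rfl,
        show Nrho 0 5 = 0 from rfl,
        show Nrho 1 0 = 0 from rfl,
        show Nrho 1 1 = 0 from rfl,
        show Nrho 1 2 = 0 from rfl,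
        show Nrho 1 3 = 0 from rfl,
        show Nrho 1 4 = 0 from rfl,
        show Nrho 1 5 = 1 from rfl,
        show Nrho 2 0 = 0 from rfl,
        show Nrho 2 1 = 0 from rfl,
        show Nrho 2 2 = 0 from rfl,
        show Nrho 2 3 = 0 from rfl,
        show Nrho 2 4 = 1 from rfl,
        show Nrho 2 5 = 0 from rfl,
        show Nrho 3 0 = 1 from rfl,
        show Nrho 3 1 = 0 from rfl,
        show Nrho 3 2 = 0 from rfl,
        show Nrho 3 3 = 1 from rfl,
        show Nrho 3 4 = 1 from rfl,
        show Nrho 3 5 = 1 from rfl,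
        show Nrho 4 0 = 0 from rfl,
        show Nrho 4 1 = 0 from rfl,
        show Nrho 4 2 = 1 from rfl,
        show Nrho 4 3 = 1 from rfl,
        show Nrho 4 4 = 1 from rfl,
        show Nrho 4 5 = 1 from rfl,
        show Nrho 5 0 = 0 from rfl,
        show Nrho 5 1 = 1 from rfl,
        show Nrho 5 2 = 0 from rfl,
        show Nrho 5 3 = 1 from rfl,
        show Nrho 5 4 = 1 from rfl,
        show Nrho 5 5 = 1 from rfl,
        show (![1, 1, 1, (3 + Real.sqrt 13) / 2, (3 + Real.sqrt 13) / 2, (3 + Real.sqrt 13) / 2] : Fin 6 → ℝ) 0 = (1:ℝ) from rfl,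
        show (![1, 1, 1, (3 + Real.sqrt 13) / 2, (3 + Real.sqrt 13) / 2, (3 + Real.sqrt 13) / 2] : Fin 6 → ℝ) 1 = (1:ℝ) from rfl,
        show (![1, 1, 1, (3 + Real.sqrt 13) / 2, (3 + Real.sqrt 13) / 2, (3 + Real.sqrt 13) / 2] : Fin 6 → ℝ) 2 = (1:ℝ) from rfl,
        show (![1, 1, 1, (3 + Real.sqrt 13) / 2, (3 + Real.sqrt 13) / 2, (3 + Real.sqrt 13) / 2] : Fin 6 → ℝ) 3 = (3 + Real.sqrt 13) / 2 from rfl,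
        show (![1, 1, 1, (3 + Real.sqrt 13) / 2, (3 + Real.sqrt 13) / 2, (3 + Real.sqrt 13) / 2] : Fin 6 → ℝ) 4 = (3 + Real.sqrt 13) / 2 from rfl,
        show (![1, 1, 1, (3 + Real.sqrt 13) / 2, (3 + Real.sqrt 13) / 2, (3 + Real.sqrt 13) / 2] : Fin 6 → ℝ) 5 = (3 + Real.sqrt 13) / 2 from rfl]
      nlinarith
  · rintro μ ⟨v, hv, hev⟩
    have E : ∀ i, (Finset.univ.sum fun j => Nrho i j * v j) = μ * v i := by
      intro i
      have h := congrFun hev i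
      simpa [Matrix.mulVec, dotProduct] using h
    have e0 := E 0; have e1 := E 1; have e2 := E 2
    have e3 := E 3; have e4 := E 4; have e5 := E 5
    simp only [Fin.sum_univ_six,
        show Nrho 0 0 = 0 from rfl,
        show Nrho 0 1 = 0 from rfl,
        show Nrho 0 2 = 0 from rfl,
        show Nrho 0 3 = 1 from rfl,
        show Nrho 0 4 = 0 from rfl,
        show Nrho 0 5 = 0 from rfl,
        show Nrho 1 0 = 0 from rfl,
        show Nrho 1 1 = 0 from rfl,
        show Nrho 1 2 = 0 from rfl,
        show Nrho 1 3 = 0 from rfl,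
        show Nrho 1 4 = 0 from rfl,
        show Nrho 1 5 = 1 from rfl,
        show Nrho 2 0 = 0 from rfl,
        show Nrho 2 1 = 0 from rfl,
        show Nrho 2 2 = 0 from rfl,
        show Nrho 2 3 = 0 from rfl,
        show Nrho 2 4 = 1 from rfl,
        show Nrho 2 5 = 0 from rfl,
        show Nrho 3 0 = 1 from rfl,
        show Nrho 3 1 = 0 from rfl,
        show Nrho 3 2 = 0 from rfl,
        show Nrho 3 3 = 1 from rfl,
        show Nrho 3 4 = 1 from rfl,
        show Nrho 3 5 = 1 from rfl,
        show Nrho 4 0 = 0 from rfl,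
        show Nrho 4 1 = 0 from rfl,
        show Nrho 4 2 = 1 from rfl,
        show Nrho 4 3 = 1 from rfl,
        show Nrho 4 4 = 1 from rfl,
        show Nrho 4 5 = 1 from rfl,
        show Nrho 5 0 = 0 from rfl,
        show Nrho 5 1 = 1 from rfl,
        show Nrho 5 2 = 0 from rfl,
        show Nrho 5 3 = 1 from rfl,
        show Nrho 5 4 = 1 from rfl,
        show Nrho 5 5 = 1 from rfl,
        zero_mul, one_mul, add_zero, zero_add] at e0 e1 e2 e3 e4 e5
    have key : μ ^ 2 = 3 * μ + 1 ∨ μ ^ 2 = 1 := by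
      by_cases hS : v 0 + v 1 + v 2 = 0
      · by_cases h02 : v 0 - v 2 = 0
        · by_cases h01 : v 0 - v 1 = 0
          · exfalso
            apply hv
            have h0 : v 0 = 0 := by linarith
            have h1 : v 1 = 0 := by linarith
            have h2 : v 2 = 0 := by linarith
            have h3 : v 3 = 0 := by rw [e0, h0]; ring
            have h4 : v 4 = 0 := by rw [e2, h2]; ring
            have h5 : v 5 = 0 := by rw [e1, h1]; ring
            funext i
            fin_cases i <;>
              simpa using by first | exact h0 | exact h1 | exact h2 | exact h3 | exact h4 | exact h5
          · right
            have k1 : μ * (v 0 - v 1) = v 3 - v 5 := by linear_combination e1 - e0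
            have k2 : μ * (v 3 - v 5) = v 0 - v 1 := by linear_combination e5 - e3
            have k3 : (μ ^ 2 - 1) * (v 0 - v 1) = 0 := by linear_combination μ * k1 + k2
            rcases mul_eq_zero.mp k3 with h | h
            · linarith
            · exact absurd h h01
        · right
          have k1 : μ * (v 0 - v 2) = v 3 - v 4 := by linear_combination e2 - e0
          have k2 : μ * (v 3 - v 4) = v 0 - v 2 := by linear_combination e4 - e3
          have k3 : (μ ^ 2 - 1) * (v 0 - v 2) = 0 := by linear_combination μ * k1 + k2
          rcases mul_eq_zero.mp k3 with h | h
          · linarith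
          · exact absurd h h02
      · left
        have k1 : μ * (v 0 + v 1 + v 2) = v 3 + v 4 + v 5 := by
          linear_combination - e0 - e1 - e2
        have k2 : μ * (v 3 + v 4 + v 5) = (v 0 + v 1 + v 2) + 3 * (v 3 + v 4 + v 5) := by
          linear_combination - e3 - e4 - e5
        have k3 : (μ ^ 2 - 3 * μ - 1) * (v 0 + v 1 + v 2) = 0 := by
          linear_combination μ * k1 + k2 - 3 * k1
        rcases mul_eq_zero.mp k3 with h | h
        · linarith
        · exact absurd h hS
    rcases key with h | h
    · nlinarith [sq_nonneg (2 * μ - 3 - Real.sqrt 13), sq_nonneg (2 * μ - 3 + Real.sqrt 13)]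
    · nlinarith
end

section
/- Let ξ = exp(2πi/39) be a primitive 39th root of unity and set d' = -ξ²³ - ξ¹⁷ - ξ¹⁴ + ξ¹² - ξ¹⁰ + ξ⁹ - ξ⁴ + ξ³ - ξ + 2. Then d' = (3 + √13)/2, i.e., d' is real and satisfies d'² = 3d' + 1 with d' > 0. -/
open Complex

/-- ξ = exp(2πi/39), a primitive 39th root of unity. -/
noncomputable def ξ : ℂ := Complex.exp (2 * Real.pi * Complex.I / 39)

lemma xi_pow (n : ℕ) : ξ ^ n = Complex.exp (n * (2 * Real.pi * Complex.I / 39)) := by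
  rw [ξ, ← Complex.exp_nat_mul]

lemma xi39 : ξ ^ 39 = 1 := by
  rw [xi_pow]
  push_cast
  rw [show (39 : ℂ) * (2 * Real.pi * Complex.I / 39) = 2 * Real.pi * Complex.I by ring]
  exact Complex.exp_two_pi_mul_I

lemma exp_ne_one {q : ℚ} (hq0 : 0 < q) (hq1 : q < 1) :
    Complex.exp (2 * Real.pi * Complex.I * q) ≠ 1 := by
  intro h
  rw [Complex.exp_eq_one_iff] at h
  obtain ⟨n, hn⟩ := h
  have hπ : (Real.pi : ℂ) ≠ 0 := by simpa using Real.pi_ne_zero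
  have hI : Complex.I ≠ 0 := Complex.I_ne_zero
  have hc : (q : ℂ) = (n : ℂ) := by
    have h2 : (2 : ℂ) * Real.pi * Complex.I ≠ 0 := by simp [hπ, hI]
    apply mul_left_cancel₀ h2
    rw [hn]; ring
  have hq : q = (n : ℚ) := by exact_mod_cast hc
  rcases lt_or_ge n 1 with h | h
  · have : q ≤ 0 := by
      rw [hq]; exact_mod_cast by omega
    linarith
  · have : (1 : ℚ) ≤ q := by
      rw [hq]; exact_mod_cast h
    linarith

lemma cube_rel : ξ ^ 26 + ξ ^ 13 + 1 = 0 := by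
  have h3 : (ξ ^ 13) ^ 3 = 1 := by rw [← pow_mul]; exact xi39
  have hne : ξ ^ 13 ≠ 1 := by
    rw [xi_pow]
    have := exp_ne_one (q := 1/3) (by norm_num) (by norm_num)
    convert this using 2
    push_cast; ring
  have h : (ξ ^ 13 - 1) * (ξ ^ 26 + ξ ^ 13 + 1) = 0 := by linear_combination h3
  rcases mul_eq_zero.mp h with h | h
  · exact absurd (by linear_combination h) hne
  · exact h

lemma b13 : (ξ ^ 3) ^ 13 = 1 := by rw [← pow_mul]; exact xi39

lemma phi13 : (ξ^3)^12 + (ξ^3)^11 + (ξ^3)^10 + (ξ^3)^9 + (ξ^3)^8 + (ξ^3)^7 + (ξ^3)^6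
    + (ξ^3)^5 + (ξ^3)^4 + (ξ^3)^3 + (ξ^3)^2 + (ξ^3) + 1 = 0 := by
  have hne : ξ ^ 3 ≠ 1 := by
    rw [xi_pow]
    have := exp_ne_one (q := 1/13) (by norm_num) (by norm_num)
    convert this using 2
    push_cast; ring
  have h : (ξ ^ 3 - 1) * ((ξ^3)^12 + (ξ^3)^11 + (ξ^3)^10 + (ξ^3)^9 + (ξ^3)^8 + (ξ^3)^7 + (ξ^3)^6
      + (ξ^3)^5 + (ξ^3)^4 + (ξ^3)^3 + (ξ^3)^2 + (ξ^3) + 1) = 0 := by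
    linear_combination b13
  rcases mul_eq_zero.mp h with h | h
  · exact absurd (by linear_combination h) hne
  · exact h

noncomputable def cval : ℝ :=
  2 * (Real.cos (2 * Real.pi / 13) + Real.cos (6 * Real.pi / 13) + Real.cos (8 * Real.pi / 13))

lemma pair1 : ξ ^ 3 + ξ ^ 36 = 2 * ((Real.cos (2 * Real.pi / 13) : ℝ) : ℂ) := by
  have h1 : ξ ^ 3 = Complex.exp (((2 * Real.pi / 13 : ℝ) : ℂ) * Complex.I) := by
    rw [xi_pow]; congr 1; push_cast; ring
  have h2 : ξ ^ 36 = Complex.exp (-((2 * Real.pi / 13 : ℝ) : ℂ) * Complex.I) := by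
    rw [xi_pow]
    rw [show ((36 : ℕ) : ℂ) * (2 * Real.pi * Complex.I / 39)
        = 2 * Real.pi * Complex.I + -((2 * Real.pi / 13 : ℝ) : ℂ) * Complex.I by push_cast; ring]
    rw [Complex.exp_add, Complex.exp_two_pi_mul_I, one_mul]
  rw [h1, h2, Complex.ofReal_cos, Complex.two_cos]

lemma pair3 : ξ ^ 9 + ξ ^ 30 = 2 * ((Real.cos (6 * Real.pi / 13) : ℝ) : ℂ) := by
  have h1 : ξ ^ 9 = Complex.exp (((6 * Real.pi / 13 : ℝ) : ℂ) * Complex.I) := by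
    rw [xi_pow]; congr 1; push_cast; ring
  have h2 : ξ ^ 30 = Complex.exp (-((6 * Real.pi / 13 : ℝ) : ℂ) * Complex.I) := by
    rw [xi_pow]
    rw [show ((30 : ℕ) : ℂ) * (2 * Real.pi * Complex.I / 39)
        = 2 * Real.pi * Complex.I + -((6 * Real.pi / 13 : ℝ) : ℂ) * Complex.I by push_cast; ring]
    rw [Complex.exp_add, Complex.exp_two_pi_mul_I, one_mul]
  rw [h1, h2, Complex.ofReal_cos, Complex.two_cos]

lemma pair4 : ξ ^ 12 + ξ ^ 27 = 2 * ((Real.cos (8 * Real.pi / 13) : ℝ) : ℂ) := by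
  have h1 : ξ ^ 12 = Complex.exp (((8 * Real.pi / 13 : ℝ) : ℂ) * Complex.I) := by
    rw [xi_pow]; congr 1; push_cast; ring
  have h2 : ξ ^ 27 = Complex.exp (-((8 * Real.pi / 13 : ℝ) : ℂ) * Complex.I) := by
    rw [xi_pow]
    rw [show ((27 : ℕ) : ℂ) * (2 * Real.pi * Complex.I / 39)
        = 2 * Real.pi * Complex.I + -((8 * Real.pi / 13 : ℝ) : ℂ) * Complex.I by push_cast; ring]
    rw [Complex.exp_add, Complex.exp_two_pi_mul_I, one_mul]
  rw [h1, h2, Complex.ofReal_cos, Complex.two_cos]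

lemma hs : ξ ^ 3 + ξ ^ 9 + ξ ^ 12 + ξ ^ 27 + ξ ^ 30 + ξ ^ 36 = (cval : ℂ) := by
  have p1 := pair1
  have p3 := pair3
  have p4 := pair4
  rw [cval]
  push_cast at p1 p3 p4 ⊢
  linear_combination p1 + p3 + p4

lemma quad : (cval : ℂ) ^ 2 + (cval : ℂ) - 3 = 0 := by
  linear_combination (ξ^3 + ξ^9 + ξ^12 + ξ^27 + ξ^30 + ξ^36 + (cval : ℂ) + 1) * hs.symm +
    (6 + 2*ξ^3 + 2*ξ^6 + 2*ξ^9 + ξ^15 + 2*ξ^18 + ξ^21 + 2*ξ^24 + 2*ξ^27 + ξ^33) * b13 + 3 * phi13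

lemma quadR : cval ^ 2 + cval - 3 = 0 := by
  exact_mod_cast quad

lemma cval_pos : 0 < cval := by
  have hπ := Real.pi_pos
  have h1 : Real.cos (Real.pi / 3) < Real.cos (2 * Real.pi / 13) := by
    apply Real.cos_lt_cos_of_nonneg_of_le_pi (by positivity) (by linarith) (by linarith)
  rw [Real.cos_pi_div_three] at h1
  have h2 : 0 < Real.cos (6 * Real.pi / 13) := by
    apply Real.cos_pos_of_mem_Ioo
    constructor <;> [linarith; linarith]
  have h3 : Real.cos (8 * Real.pi / 13) > -(1/2) := by
    rw [show (8 : ℝ) * Real.pi / 13 = Real.pi - 5 * Real.pi / 13 by ring, Real.cos_pi_sub]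
    have h : Real.cos (Real.pi / 3) < Real.cos (5 * Real.pi / 13) → False := by
      intro hcc
      have := Real.cos_lt_cos_of_nonneg_of_le_pi (by positivity) (by linarith)
        (by linarith : Real.pi / 3 < 5 * Real.pi / 13)
      linarith
    have h' : Real.cos (5 * Real.pi / 13) < Real.cos (Real.pi / 3) :=
      Real.cos_lt_cos_of_nonneg_of_le_pi (by positivity) (by linarith) (by linarith)
    rw [Real.cos_pi_div_three] at h'
    linarith
  rw [cval]
  linarith

lemma sqrt13 : Real.sqrt 13 = 2 * cval + 1 := by
  have hq := quadR
  have hp := cval_pos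
  have h : (13 : ℝ) = (2 * cval + 1) ^ 2 := by nlinarith
  rw [h, Real.sqrt_sq (by linarith)]

/-- The cyclotomic expression -ξ²³ - ξ¹⁷ - ξ¹⁴ + ξ¹² - ξ¹⁰ + ξ⁹ - ξ⁴ + ξ³ - ξ + 2 equals
(3 + √13)/2 (in particular it is real, positive, and satisfies d² = 3d + 1). -/
theorem stmt15 :
    -ξ ^ 23 - ξ ^ 17 - ξ ^ 14 + ξ ^ 12 - ξ ^ 10 + ξ ^ 9 - ξ ^ 4 + ξ ^ 3 - ξ + 2
      = (((3 + Real.sqrt 13) / 2 : ℝ) : ℂ) := by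
  rw [sqrt13]
  push_cast
  linear_combination hs + (-ξ^10 - ξ^4 - ξ) * cube_rel
end
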